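/- Let X = (x₁,…,x_n) be vectors in a subspace U ⊆ ℝ^d, and let Ψ : ℝ^d → ℝ^p be linear with (1/√(1+ε))‖v‖ ≤ ‖Ψv‖ for all v ∈ U and ‖Ψx_i‖ ≤ √(1+ε) for each i. Let ρ be the inradius of the symmetric convex hull Q(X) = conv(±x₁,…,±x_n) within U, and let ρ̃ be the inradius of conv(±Ψx₁/‖Ψx₁‖,…,±Ψx_n/‖Ψx_n‖) within ΨU. Then ρ̃ ≥ ρ/(1+ε). -/
import Mathlib


/-- The inradius of a set `K` within a subspace `U`: the radius of the largest
origin-centered ball (intersected with `U`) contained in `K`. -/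
noncomputable def inradius {E : Type*} [NormedAddCommGroup E] [NormedSpace ℝ E]
    (U : Submodule ℝ E) (K : Set E) : ℝ :=
  sSup {r : ℝ | 0 ≤ r ∧ ∀ v ∈ U, ‖v‖ ≤ r → v ∈ K}

/-- The symmetric convex hull of a finite family of vectors. -/
noncomputable def symmConvexHull {E : Type*} [NormedAddCommGroup E] [NormedSpace ℝ E]
    {n : ℕ} (X : Fin n → E) : Set E :=
  convexHull ℝ (Set.range X ∪ Set.range fun i => -X i)

lemma smul_mem_symmConvexHull {E : Type*} [NormedAddCommGroup E] [NormedSpace ℝ E]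
    {n : ℕ} (Y : Fin n → E) (i : Fin n) {c : ℝ} (hc : |c| ≤ 1) :
    c • Y i ∈ symmConvexHull Y := by
  rw [abs_le] at hc
  have h1 : Y i ∈ symmConvexHull Y :=
    subset_convexHull ℝ _ (Or.inl ⟨i, rfl⟩)
  have h2 : -Y i ∈ symmConvexHull Y :=
    subset_convexHull ℝ _ (Or.inr ⟨i, rfl⟩)
  have hcv : Convex ℝ (symmConvexHull Y) := convex_convexHull ℝ _
  have hmem := hcv h1 h2 (a := (1 + c) / 2) (b := (1 - c) / 2)
    (by linarith) (by linarith) (by ring)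
  have heq : ((1 + c) / 2) • Y i + ((1 - c) / 2) • (-Y i) = c • Y i := by
    rw [smul_neg, ← sub_eq_add_neg, ← sub_smul]
    congr 1
    ring
  rwa [heq] at hmem

lemma symmConvexHull_bounded {E : Type*} [NormedAddCommGroup E] [NormedSpace ℝ E]
    {n : ℕ} (Y : Fin n → E) (M : ℝ) (hM : 0 ≤ M) (hY : ∀ i, ‖Y i‖ ≤ M) :
    ∀ y ∈ symmConvexHull Y, ‖y‖ ≤ M := by
  have hsub : symmConvexHull Y ⊆ Metric.closedBall 0 M := by
    apply convexHull_min _ (convex_closedBall 0 M)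
    rintro y (⟨i, rfl⟩ | ⟨i, rfl⟩) <;>
      simp only [Metric.mem_closedBall, dist_zero_right, norm_neg] <;> exact hY i
  intro y hy
  have := hsub hy
  simpa [Metric.mem_closedBall, dist_zero_right] using this

theorem inradius_perturbation
    {d p n : ℕ} (U : Submodule ℝ (EuclideanSpace ℝ (Fin d)))
    (Ψ : EuclideanSpace ℝ (Fin d) →ₗ[ℝ] EuclideanSpace ℝ (Fin p))
    (ε : ℝ) (hε : 0 < ε)
    (X : Fin n → EuclideanSpace ℝ (Fin d))
    (hXU : ∀ i, X i ∈ U) (hX0 : ∀ i, X i ≠ 0)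
    (hinj : ∀ v ∈ U, ∀ w ∈ U, Ψ v = Ψ w → v = w)
    (hlow : ∀ v ∈ U, ‖v‖ / Real.sqrt (1 + ε) ≤ ‖Ψ v‖)
    (hcols : ∀ i, ‖Ψ (X i)‖ ≤ Real.sqrt (1 + ε)) :
    inradius U (symmConvexHull X) / (1 + ε) ≤
      inradius (U.map Ψ) (symmConvexHull fun i => ‖Ψ (X i)‖⁻¹ • Ψ (X i)) := by
  set s : ℝ := Real.sqrt (1 + ε) with hs_def
  have h1ε : (0 : ℝ) < 1 + ε := by linarith
  have hs : 0 < s := Real.sqrt_pos.mpr h1ε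
  have hs2 : s * s = 1 + ε := Real.mul_self_sqrt (le_of_lt h1ε)
  set K : Set (EuclideanSpace ℝ (Fin d)) := symmConvexHull X with hK_def
  set Kt : Set (EuclideanSpace ℝ (Fin p)) :=
    symmConvexHull fun i => ‖Ψ (X i)‖⁻¹ • Ψ (X i) with hKt_def
  set S : Set ℝ := {r : ℝ | 0 ≤ r ∧ ∀ v ∈ U, ‖v‖ ≤ r → v ∈ K} with hS_def
  set St : Set ℝ := {r : ℝ | 0 ≤ r ∧ ∀ v ∈ U.map Ψ, ‖v‖ ≤ r → v ∈ Kt} with hSt_def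
  have hΨX0 : ∀ i, ‖Ψ (X i)‖ ≠ 0 := by
    intro i
    have h1 := hlow (X i) (hXU i)
    have h2 : 0 < ‖X i‖ := norm_pos_iff.mpr (hX0 i)
    have : 0 < ‖X i‖ / s := div_pos h2 hs
    linarith
  -- `Kt` is contained in the unit ball
  have hKt_bdd : ∀ y ∈ Kt, ‖y‖ ≤ 1 := by
    apply symmConvexHull_bounded _ 1 zero_le_one
    intro i
    rw [norm_smul, norm_inv, norm_norm]
    exact inv_mul_le_one
  have hSt_nonneg : 0 ≤ sSup St := Real.sSup_nonneg fun r hr => hr.1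
  -- Key step: if `r ∈ S`, then `r / (1+ε) ∈ St`
  have hkey : ∀ r ∈ S, r / (1 + ε) ∈ St := by
    intro r hr
    refine ⟨div_nonneg hr.1 (le_of_lt h1ε), ?_⟩
    rintro w hw hwn
    rw [Submodule.mem_map] at hw
    obtain ⟨v, hvU, rfl⟩ := hw
    have h1 : ‖v‖ ≤ s * ‖Ψ v‖ := by
      have := hlow v hvU
      rw [div_le_iff₀ hs] at this
      linarith [mul_comm ‖Ψ v‖ s]
    have h2 : ‖s • v‖ ≤ r := by
      rw [norm_smul, Real.norm_eq_abs, abs_of_pos hs]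
      have : s * ‖v‖ ≤ s * (s * ‖Ψ v‖) :=
        mul_le_mul_of_nonneg_left h1 (le_of_lt hs)
      have h3 : s * (s * ‖Ψ v‖) = (1 + ε) * ‖Ψ v‖ := by rw [← mul_assoc, hs2]
      have h4 : (1 + ε) * ‖Ψ v‖ ≤ (1 + ε) * (r / (1 + ε)) :=
        mul_le_mul_of_nonneg_left hwn (le_of_lt h1ε)
      have h5 : (1 + ε) * (r / (1 + ε)) = r := by field_simp
      linarith
    have hKmem : s • v ∈ K := hr.2 _ (Submodule.smul_mem U s hvU) h2
    -- the preimage of `Kt` under `x ↦ s⁻¹ • Ψ x` is convex and contains the generators of `K`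
    have hTconv : Convex ℝ ((⇑(s⁻¹ • Ψ)) ⁻¹' Kt) :=
      (convex_convexHull ℝ _).linear_preimage (s⁻¹ • Ψ)
    have hcle : ∀ i : Fin n, |s⁻¹ * ‖Ψ (X i)‖| ≤ 1 := by
      intro i
      rw [abs_of_nonneg (by positivity)]
      rw [← inv_mul_cancel₀ (ne_of_gt hs)]
      exact mul_le_mul_of_nonneg_left (hcols i) (by positivity)
    have hgen : (Set.range X ∪ Set.range fun i => -X i) ⊆ (⇑(s⁻¹ • Ψ)) ⁻¹' Kt := by
      rintro x (⟨i, rfl⟩ | ⟨i, rfl⟩)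
      · show (s⁻¹ • Ψ) (X i) ∈ Kt
        rw [LinearMap.smul_apply]
        have := smul_mem_symmConvexHull (fun i => ‖Ψ (X i)‖⁻¹ • Ψ (X i)) i (hcle i)
        rwa [smul_smul, mul_assoc, mul_inv_cancel₀ (hΨX0 i), mul_one] at this
      · show (s⁻¹ • Ψ) (-X i) ∈ Kt
        rw [LinearMap.smul_apply]
        have hcle' : |(-(s⁻¹ * ‖Ψ (X i)‖))| ≤ 1 := by rw [abs_neg]; exact hcle i
        have := smul_mem_symmConvexHull (fun i => ‖Ψ (X i)‖⁻¹ • Ψ (X i)) i hcle'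
        rw [neg_smul, smul_smul, mul_assoc, mul_inv_cancel₀ (hΨX0 i), mul_one] at this
        rw [map_neg, smul_neg]
        exact this
    have hsub : K ⊆ (⇑(s⁻¹ • Ψ)) ⁻¹' Kt := convexHull_min hgen hTconv
    have hmem : (s⁻¹ • Ψ) (s • v) ∈ Kt := hsub hKmem
    have heq : (s⁻¹ • Ψ) (s • v) = Ψ v := by
      rw [LinearMap.smul_apply, map_smul, smul_smul, inv_mul_cancel₀ (ne_of_gt hs), one_smul]
    rwa [heq] at hmem
  -- now conclude, by cases
  show sSup S / (1 + ε) ≤ sSup St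
  by_cases hStB : BddAbove St
  · by_cases hSne : S.Nonempty
    · rw [div_le_iff₀ h1ε]
      apply csSup_le hSne
      intro r hr
      have := le_csSup hStB (hkey r hr)
      rw [div_le_iff₀ h1ε] at this
      linarith
    · rw [Set.not_nonempty_iff_eq_empty] at hSne
      rw [hSne, Real.sSup_empty, zero_div]
      exact hSt_nonneg
  · -- `St` unbounded: then `Kt` is all of a trivial `U.map Ψ`, hence `U` trivial, `S` unbounded
    rw [Real.sSup_of_not_bddAbove hStB]
    rcases Nat.eq_zero_or_pos n with hn | hn
    · -- n = 0 : St is empty, contradiction with unboundedness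
      exfalso
      apply hStB
      refine ⟨0, ?_⟩
      rintro r ⟨hr0, hr⟩
      exfalso
      have h0 : (0 : EuclideanSpace ℝ (Fin p)) ∈ U.map Ψ := Submodule.zero_mem _
      have := hr 0 h0 (by simpa using hr0)
      subst hn
      rw [hKt_def] at this
      simp only [symmConvexHull] at this
      rw [show (Set.range fun i : Fin 0 => ‖Ψ (X i)‖⁻¹ • Ψ (X i)) = ∅ from
        Set.range_eq_empty _, show (Set.range fun i : Fin 0 =>
          -(‖Ψ (X i)‖⁻¹ • Ψ (X i))) = ∅ from Set.range_eq_empty _] at this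
      simp at this
    · -- n ≥ 1
      have i0 : Fin n := ⟨0, hn⟩
      have h0K : (0 : EuclideanSpace ℝ (Fin d)) ∈ K := by
        have := smul_mem_symmConvexHull X i0 (c := 0) (by simp)
        rwa [zero_smul] at this
      -- U.map Ψ must be trivial, else St is bounded by 1
      have hUtriv : ∀ v ∈ U, v = 0 := by
        intro v hvU
        by_contra hv0
        apply hStB
        have hΨv0 : Ψ v ≠ 0 := by
          intro h
          have h1 := hlow v hvU
          rw [h, norm_zero] at h1
          have h2 : 0 < ‖v‖ := norm_pos_iff.mpr hv0
          have : 0 < ‖v‖ / s := div_pos h2 hs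
          linarith
        refine ⟨1, ?_⟩
        rintro r ⟨hr0, hr⟩
        have hwU : (r / ‖Ψ v‖) • Ψ v ∈ U.map Ψ :=
          Submodule.smul_mem _ _ (Submodule.mem_map_of_mem hvU)
        have hnorm : ‖(r / ‖Ψ v‖) • Ψ v‖ = r := by
          rw [norm_smul, Real.norm_eq_abs, abs_of_nonneg (by positivity)]
          exact div_mul_cancel₀ r (norm_ne_zero_iff.mpr hΨv0)
        have := hKt_bdd _ (hr _ hwU (le_of_eq hnorm))
        rw [hnorm] at this
        exact this
      -- then S is unbounded, so sSup S = 0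
      have hSunb : ¬BddAbove S := by
        rintro ⟨b, hb⟩
        have hmem : max b 0 + 1 ∈ S := by
          refine ⟨by positivity, ?_⟩
          intro v hvU _
          rw [hUtriv v hvU]
          exact h0K
        have := hb hmem
        have h2 : b ≤ max b 0 := le_max_left _ _
        linarith
      rw [Real.sSup_of_not_bddAbove hSunb, zero_div]
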